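/- Let ℓ = {r + λ·v : λ ∈ ℝ} and ℓ' = {r' + λ'·v' : λ' ∈ ℝ} be two timelike lines in Minkowski space Mⁿ (n ≥ 2) whose direction vectors v, v' are timelike and linearly independent. Then there exists a unique pair of points (q, q') ∈ ℓ × ℓ' such that g(q − q', v) = 0 and g(q − q', v') = 0, i.e. such that q' is Einstein-simultaneous with q relative to ℓ and q is Einstein-simultaneous with q' relative to ℓ'. -/

import Mathlib

/-!
Writing `q = r + λ v` and `q' = r' + λ' v'`, the two simultaneity conditions form a linear
system in `(λ, λ')` with determinant `g(v, v')² - g(v, v) g(v', v')`. This is nonzero by the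
strict reverse Cauchy–Schwarz inequality: the plane spanned by `v, v'` contains the timelike
vector `v'`, and the orthogonal complement of a timelike vector is spacelike.
-/

/-- The Minkowski bilinear form of signature `(1, n-1)` on `ℝⁿ`:
`g v w = v⁰w⁰ - ∑_{i=1}^{n-1} vⁱwⁱ`. -/
noncomputable def minkG {n : ℕ} (v w : Fin n → ℝ) : ℝ :=
  ∑ i : Fin n, if (i : ℕ) = 0 then v i * w i else -(v i * w i)

section Bilinear

variable {n : ℕ}

lemma minkG_comm (v w : Fin n → ℝ) : minkG v w = minkG w v := by
  simp only [minkG, mul_comm (v _)]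

lemma minkG_add_left (x y w : Fin n → ℝ) : minkG (x + y) w = minkG x w + minkG y w := by
  rw [minkG, minkG, minkG, ← Finset.sum_add_distrib]
  refine Finset.sum_congr rfl fun i _ => ?_
  split_ifs <;> simp only [Pi.add_apply] <;> ring

lemma minkG_sub_left (x y w : Fin n → ℝ) : minkG (x - y) w = minkG x w - minkG y w := by
  rw [minkG, minkG, minkG, ← Finset.sum_sub_distrib]
  refine Finset.sum_congr rfl fun i _ => ?_
  split_ifs <;> simp only [Pi.sub_apply] <;> ring

lemma minkG_smul_left (c : ℝ) (x w : Fin n → ℝ) : minkG (c • x) w = c * minkG x w := by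
  rw [minkG, minkG, Finset.mul_sum]
  refine Finset.sum_congr rfl fun i _ => ?_
  split_ifs <;> simp only [Pi.smul_apply, smul_eq_mul] <;> ring

lemma minkG_sub_right (w x y : Fin n → ℝ) : minkG w (x - y) = minkG w x - minkG w y := by
  rw [minkG_comm, minkG_sub_left, minkG_comm x, minkG_comm y]

lemma minkG_smul_right (c : ℝ) (w x : Fin n → ℝ) : minkG w (c • x) = c * minkG w x := by
  rw [minkG_comm, minkG_smul_left, minkG_comm x]

end Bilinear

lemma minkG_eq_sub_sum {n : ℕ} (v w : Fin (n + 1) → ℝ) :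
    minkG v w = v 0 * w 0 - ∑ i : Fin n, v i.succ * w i.succ := by
  simp [minkG, Fin.sum_univ_succ, sub_eq_add_neg]

lemma eq_zero_of_sum_succ_sq_eq_zero {n : ℕ} {w : Fin (n + 1) → ℝ} (h0 : w 0 = 0)
    (hs : ∑ i : Fin n, w i.succ ^ 2 = 0) : w = 0 := by
  have hsucc := (Finset.sum_eq_zero_iff_of_nonneg fun i _ => sq_nonneg (w i.succ)).mp hs
  funext i
  induction i using Fin.cases with
  | zero => exact h0
  | succ i => exact pow_eq_zero_iff two_ne_zero |>.mp (hsucc i (Finset.mem_univ i))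

/-- Cauchy–Schwarz on the spatial parts gives `(w⁰v⁰)² ≤ |w⃗|²|v⃗|²`, while `|v⃗|² < (v⁰)²`. -/
lemma minkG_self_neg_of_orthogonal {n : ℕ} {v w : Fin (n + 1) → ℝ} (hv : 0 < minkG v v)
    (hwv : minkG w v = 0) (hw : w ≠ 0) : minkG w w < 0 := by
  rw [minkG_eq_sub_sum] at hv hwv ⊢
  simp only [← sq] at hv ⊢
  set Sv := ∑ i : Fin n, v i.succ ^ 2
  set Sw := ∑ i : Fin n, w i.succ ^ 2
  have hSv : 0 ≤ Sv := Finset.sum_nonneg fun i _ => sq_nonneg _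
  have hSw : 0 ≤ Sw := Finset.sum_nonneg fun i _ => sq_nonneg _
  have hCS : (w 0 * v 0) ^ 2 ≤ Sw * Sv := by
    rw [sub_eq_zero.mp hwv]
    exact Finset.sum_mul_sq_le_sq_mul_sq _ _ _
  by_contra! hle
  have hSw_le : Sw ≤ w 0 ^ 2 := by linarith
  have hprod : w 0 ^ 2 * (v 0 ^ 2 - Sv) ≤ 0 := by
    nlinarith [mul_le_mul_of_nonneg_right hSw_le hSv]
  have hw0 : w 0 ^ 2 = 0 :=
    le_antisymm (nonpos_of_mul_nonpos_left hprod hv) (sq_nonneg _)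
  exact hw (eq_zero_of_sum_succ_sq_eq_zero (pow_eq_zero_iff two_ne_zero |>.mp hw0)
    (le_antisymm (hSw_le.trans hw0.le) hSw))

/-- Strict reverse Cauchy–Schwarz. With `b = g(v, v')` and `d = g(v', v')`, the vector
`w = d • v - b • v'` is nonzero and orthogonal to the timelike `v'`, hence spacelike, and
`g(w, w) = d * (g(v, v) * d - b ^ 2)`. -/
lemma minkG_mul_lt_sq_of_linearIndependent {n : ℕ} {v v' : Fin (n + 1) → ℝ}
    (hv' : 0 < minkG v' v') (hind : LinearIndependent ℝ ![v, v']) :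
    minkG v v * minkG v' v' < minkG v v' ^ 2 := by
  set w := minkG v' v' • v - minkG v v' • v'
  have hwv' : minkG w v' = 0 := by
    rw [minkG_sub_left, minkG_smul_left, minkG_smul_left]; ring
  have hw : w ≠ 0 := fun hw => by
    have hcomb : minkG v' v' • v + (-minkG v v') • v' = 0 := by
      rw [neg_smul, ← sub_eq_add_neg]; exact hw
    exact hv'.ne' (LinearIndependent.pair_iff.mp hind _ _ hcomb).1
  have hww : minkG w w = minkG v' v' * (minkG v v * minkG v' v' - minkG v v' ^ 2) := by
    simp only [w, minkG_sub_left, minkG_sub_right, minkG_smul_left, minkG_smul_right,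
      minkG_comm v' v]
    ring
  have hneg := minkG_self_neg_of_orthogonal hv' hwv' hw
  rw [hww] at hneg
  exact sub_neg.mp (neg_of_mul_neg_right hneg hv'.le)

lemma existsUnique_of_det_ne_zero {K : Type*} [Field K] {a b c d e f : K}
    (h : a * d - b * c ≠ 0) :
    ∃! p : K × K, a * p.1 + b * p.2 = e ∧ c * p.1 + d * p.2 = f := by
  refine ⟨((e * d - b * f) / (a * d - b * c), (a * f - c * e) / (a * d - b * c)),
    ⟨?_, ?_⟩, ?_⟩
  · rw [mul_div_assoc', mul_div_assoc', ← add_div, div_eq_iff h]; ring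
  · rw [mul_div_assoc', mul_div_assoc', ← add_div, div_eq_iff h]; ring
  · rintro ⟨x, y⟩ ⟨h1, h2⟩
    rw [Prod.ext_iff, eq_div_iff h, eq_div_iff h]
    constructor
    · linear_combination d * h1 - b * h2
    · linear_combination a * h2 - c * h1

lemma minkG_line_sub_line {n : ℕ} (r v r' v' w : Fin n → ℝ) (l l' : ℝ) :
    minkG ((r + l • v) - (r' + l' • v')) w =
      minkG (r - r') w + l * minkG v w - l' * minkG v' w := by
  rw [show r + l • v - (r' + l' • v') = (r - r') + l • v - l' • v' by abel,
    minkG_sub_left, minkG_add_left, minkG_smul_left, minkG_smul_left]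

theorem mutual_einstein_simultaneity_general (m : ℕ)
    (r v r' v' : Fin (m + 2) → ℝ)
    (hv' : 0 < minkG v' v')
    (hind : LinearIndependent ℝ ![v, v']) :
    ∃! qq' : (Fin (m + 2) → ℝ) × (Fin (m + 2) → ℝ),
      (∃ lam : ℝ, qq'.1 = r + lam • v) ∧
      (∃ lam : ℝ, qq'.2 = r' + lam • v') ∧
      minkG (qq'.1 - qq'.2) v = 0 ∧ minkG (qq'.1 - qq'.2) v' = 0 := by
  have hdet : minkG v v * -minkG v' v' - -minkG v' v * minkG v v' ≠ 0 := by
    refine ne_of_gt ?_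
    rw [minkG_comm v' v]
    linarith [minkG_mul_lt_sq_of_linearIndependent hv' hind]
  obtain ⟨⟨l, l'⟩, ⟨h1, h2⟩, huniq⟩ := existsUnique_of_det_ne_zero hdet
    (e := -minkG (r - r') v) (f := -minkG (r - r') v')
  refine ⟨(r + l • v, r' + l' • v'), ⟨⟨l, rfl⟩, ⟨l', rfl⟩, ?_, ?_⟩, ?_⟩
  · rw [minkG_line_sub_line]; linarith
  · rw [minkG_line_sub_line]; linarith
  · rintro ⟨q, q'⟩ ⟨⟨k, hq : q = _⟩, ⟨k', hq' : q' = _⟩, hk1, hk2⟩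
    subst hq hq'
    rw [minkG_line_sub_line] at hk1 hk2
    obtain ⟨rfl, rfl⟩ := Prod.ext_iff.mp (huniq (k, k') ⟨by linarith, by linarith⟩)
    rfl

/-- Given two timelike lines `ℓ = {r + λv}` and `ℓ' = {r' + λ'v'}`
with linearly independent timelike directions, there is a unique pair
`(q, q') ∈ ℓ × ℓ'` with `g(q − q', v) = 0` and `g(q − q', v') = 0`, i.e. such that `q'`
is Einstein-simultaneous with `q` relative to `ℓ` and vice versa. -/
theorem mutual_einstein_simultaneity (m : ℕ)
    (r v r' v' : Fin (m + 2) → ℝ)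
    (hv : 0 < minkG v v) (hv' : 0 < minkG v' v')
    (hind : LinearIndependent ℝ ![v, v']) :
    ∃! qq' : (Fin (m + 2) → ℝ) × (Fin (m + 2) → ℝ),
      (∃ lam : ℝ, qq'.1 = r + lam • v) ∧
      (∃ lam : ℝ, qq'.2 = r' + lam • v') ∧
      minkG (qq'.1 - qq'.2) v = 0 ∧ minkG (qq'.1 - qq'.2) v' = 0 :=
  mutual_einstein_simultaneity_general m r v r' v' hv' hind
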